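/- Let 𝔄 = (A, Att) be a SETAF and P_𝔄 its associated NLP. Then (i) a labelling L of 𝔄 is a complete labelling if and only if L2I_𝔄(L) is a partial stable model of P_𝔄, and (ii) an interpretation M of P_𝔄 is a partial stable model of P_𝔄 if and only if I2L_𝔄(M) is a complete labelling of 𝔄. -/
import Mathlib


/-- A rule of a normal logic program:
`head ← bodyPos, not bodyNeg`. -/
structure Rule (α : Type) where
  head : α
  bodyPos : Finset α
  bodyNeg : Finset α
deriving DecidableEq

/-- A normal logic program (NLP): a finite set of rules. -/
abbrev NLP (α : Type) := Finset (Rule α)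

variable {α : Type} [DecidableEq α]

/-- The atoms occurring in a rule. -/
def Rule.atoms (r : Rule α) : Finset α :=
  insert r.head (r.bodyPos ∪ r.bodyNeg)

/-- The Herbrand base of a program: all atoms occurring in it. -/
def HB (P : NLP α) : Finset α := P.sup Rule.atoms

/-- A three-valued interpretation, given by its sets of true and false atoms. -/
structure Interp (α : Type) where
  T : Set α
  F : Set α

/-- `I` is a 3-valued interpretation over the Herbrand base `H`. -/
def IsInterp (H : Finset α) (I : Interp α) : Prop :=
  I.T ⊆ ↑H ∧ I.F ⊆ ↑H ∧ Disjoint I.T I.F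

/-- A rule of a positive program obtained as a reduct; `hasU` records whether
the special atom `u` (undefined in every interpretation) occurs in its body. -/
structure PosRule (α : Type) where
  head : α
  bodyPos : Finset α
  hasU : Prop

/-- The reduct `P/I`: delete every rule whose negative body meets `I.T`,
delete each `not b` with `b ∈ I.F`, and replace the remaining negative
literals by the special atom `u`. -/
def reduct (P : NLP α) (I : Interp α) : Set (PosRule α) :=
  { q | ∃ r ∈ P, (∀ b ∈ r.bodyNeg, b ∉ I.T) ∧
        q.head = r.head ∧ q.bodyPos = r.bodyPos ∧
        (q.hasU ↔ ∃ b ∈ r.bodyNeg, b ∉ I.F) }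

/-- The `Ψ` operator of a positive program `Q` relative to the Herbrand base
`H`; the special atom `u` is neither true nor false in any interpretation. -/
def PsiOp (H : Finset α) (Q : Set (PosRule α)) (J : Interp α) : Interp α where
  T := { c | c ∈ H ∧ ∃ q ∈ Q, q.head = c ∧ ¬ q.hasU ∧ ∀ a ∈ q.bodyPos, a ∈ J.T }
  F := { c | c ∈ H ∧ ∀ q ∈ Q, q.head = c → ∃ a ∈ q.bodyPos, a ∈ J.F }

/-- Iteration of `Ψ` starting from `⟨∅, H⟩`. -/
def PsiIter (H : Finset α) (Q : Set (PosRule α)) : ℕ → Interp α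
  | 0 => ⟨∅, ↑H⟩
  | n + 1 => PsiOp H Q (PsiIter H Q n)

/-- `Ω_P(I)`: the least three-valued model of the reduct `P/I`,
obtained as the `ω`-iteration of `Ψ`. -/
def OmegaOp (H : Finset α) (P : NLP α) (I : Interp α) : Interp α where
  T := ⋃ n, (PsiIter H (reduct P I) n).T
  F := ⋂ n, (PsiIter H (reduct P I) n).F

/-- `I` is a partial stable model of `P` (over Herbrand base `H`). -/
def IsPSModel (H : Finset α) (P : NLP α) (I : Interp α) : Prop :=
  IsInterp H I ∧ OmegaOp H P I = I

/-- Well-founded model: a partial stable model with `⊆`-minimal true part. -/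
def IsWFModel (H : Finset α) (P : NLP α) (I : Interp α) : Prop :=
  IsPSModel H P I ∧ ∀ J, IsPSModel H P J → ¬ J.T ⊂ I.T

/-- Regular model: a partial stable model with `⊆`-maximal true part. -/
def IsRegularModel (H : Finset α) (P : NLP α) (I : Interp α) : Prop :=
  IsPSModel H P I ∧ ∀ J, IsPSModel H P J → ¬ I.T ⊂ J.T

/-- Stable model: a partial stable model with `T ∪ F = H`. -/
def IsStableModel (H : Finset α) (P : NLP α) (I : Interp α) : Prop :=
  IsPSModel H P I ∧ I.T ∪ I.F = ↑H

/-- L-stable model: a partial stable model with `⊆`-maximal `T ∪ F`. -/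
def IsLStableModel (H : Finset α) (P : NLP α) (I : Interp α) : Prop :=
  IsPSModel H P I ∧ ∀ J, IsPSModel H P J → ¬ (I.T ∪ I.F) ⊂ (J.T ∪ J.F)

/-- `IsStatement P c V R`: there is a statement of `P` with conclusion `c`,
vulnerabilities `V` and rules `R`.  A statement is built from a rule
`r = c ← a₁,…,a_m, not b₁,…,not b_n ∈ P` together with statements `sᵢ` for the
positive body atoms `aᵢ` (with `r` not among their rules); its vulnerabilities
are `Vul(s₁) ∪ … ∪ Vul(s_m) ∪ {b₁,…,b_n}` and its rules are
`Rules(s₁) ∪ … ∪ Rules(s_m) ∪ {r}`. -/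
inductive IsStatement (P : NLP α) : α → Finset α → Finset (Rule α) → Prop where
  | mk (r : Rule α) (hr : r ∈ P) (v : α → Finset α) (ρ : α → Finset (Rule α))
      (hsub : ∀ a ∈ r.bodyPos, IsStatement P a (v a) (ρ a))
      (hnr : ∀ a ∈ r.bodyPos, r ∉ ρ a) :
      IsStatement P r.head (r.bodyPos.biUnion v ∪ r.bodyNeg)
        (insert r (r.bodyPos.biUnion ρ))

/-- `c` is an argument of `P`: it is the conclusion of some statement. -/
def IsArg (P : NLP α) (c : α) : Prop := ∃ V R, IsStatement P c V R

open Classical in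
/-- The set `A_P` of arguments of `P`. -/
noncomputable def argsOf (P : NLP α) : Finset α := (HB P).filter (IsArg P)

/-- `B` meets every vulnerability set of `a` in `P`. -/
def HitsVul (P : NLP α) (B : Finset α) (a : α) : Prop :=
  ∀ V R, IsStatement P a V R → ∃ b ∈ B, b ∈ V

/-- A SETAF: a finite set of arguments and an attack relation between
finite sets of arguments and arguments. -/
structure SETAF (α : Type) where
  args : Finset α
  att : Finset α → α → Prop

/-- Well-formedness of a SETAF: attackers are nonempty sets of arguments
attacking arguments, and attacking sets are `⊆`-minimal. -/
def SETAF.Wf (S : SETAF α) : Prop :=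
  (∀ B a, S.att B a → B.Nonempty ∧ B ⊆ S.args ∧ a ∈ S.args) ∧
  (∀ B a, S.att B a → ∀ B', B' ⊂ B → ¬ S.att B' a)

/-- The SETAF `𝔄_P` associated with an NLP `P`: its arguments are the
conclusions of the statements of `P`, and `B` attacks `a` iff `B` is a
`⊆`-minimal set of arguments meeting every vulnerability set of `a`. -/
noncomputable def setafOf (P : NLP α) : SETAF α where
  args := argsOf P
  att := fun B a =>
    B ⊆ argsOf P ∧ a ∈ argsOf P ∧ HitsVul P B a ∧ ∀ B', B' ⊂ B → ¬ HitsVul P B' a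

/-- Labels for arguments. -/
inductive Lab : Type
  | inn | out | und
deriving DecidableEq

/-- `in(L)`. -/
def labIn (S : SETAF α) (L : α → Lab) : Set α := { a | a ∈ S.args ∧ L a = Lab.inn }

/-- `out(L)`. -/
def labOut (S : SETAF α) (L : α → Lab) : Set α := { a | a ∈ S.args ∧ L a = Lab.out }

/-- `undec(L)`. -/
def labUnd (S : SETAF α) (L : α → Lab) : Set α := { a | a ∈ S.args ∧ L a = Lab.und }

/-- Admissible labelling. -/
def AdmissibleLab (S : SETAF α) (L : α → Lab) : Prop :=
  ∀ a ∈ S.args,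
    (L a = Lab.inn → ∀ B, S.att B a → ∃ b ∈ B, L b = Lab.out) ∧
    (L a = Lab.out → ∃ B, S.att B a ∧ ∀ b ∈ B, L b = Lab.inn)

/-- Complete labelling. -/
def CompleteLab (S : SETAF α) (L : α → Lab) : Prop :=
  AdmissibleLab S L ∧
  ∀ a ∈ S.args, L a = Lab.und →
    (∃ B, S.att B a ∧ ∀ b ∈ B, L b ≠ Lab.out) ∧
    (∀ B, S.att B a → ∃ b ∈ B, L b ≠ Lab.inn)

/-- Grounded labelling: complete with `⊆`-minimal `in(L)`. -/
def GroundedLab (S : SETAF α) (L : α → Lab) : Prop :=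
  CompleteLab S L ∧ ∀ L', CompleteLab S L' → ¬ labIn S L' ⊂ labIn S L

/-- Preferred labelling: complete with `⊆`-maximal `in(L)`. -/
def PreferredLab (S : SETAF α) (L : α → Lab) : Prop :=
  CompleteLab S L ∧ ∀ L', CompleteLab S L' → ¬ labIn S L ⊂ labIn S L'

/-- Stable labelling: complete with `undec(L) = ∅`. -/
def StableLab (S : SETAF α) (L : α → Lab) : Prop :=
  CompleteLab S L ∧ labUnd S L = ∅

/-- Semi-stable labelling: complete with `⊆`-minimal `undec(L)`. -/
def SemiStableLab (S : SETAF α) (L : α → Lab) : Prop :=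
  CompleteLab S L ∧ ∀ L', CompleteLab S L' → ¬ labUnd S L' ⊂ labUnd S L

/-- `L2I_P`: the interpretation associated with a labelling of `𝔄_P`. -/
def L2I (P : NLP α) (L : α → Lab) : Interp α where
  T := { c | c ∈ HB P ∧ c ∈ argsOf P ∧ L c = Lab.inn }
  F := { c | c ∈ HB P ∧ (c ∉ argsOf P ∨ (c ∈ argsOf P ∧ L c = Lab.out)) }

open Classical in
/-- `I2L`: the labelling associated with an interpretation (meaningful on
the arguments). -/
noncomputable def I2L (I : Interp α) : α → Lab := fun c =>
  if c ∈ I.T then Lab.inn else if c ∈ I.F then Lab.out else Lab.und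

/-- `L2I_𝔄`: the interpretation `⟨in(L), out(L)⟩` associated with a labelling
of a SETAF `𝔄`. -/
def L2Iset (S : SETAF α) (L : α → Lab) : Interp α := ⟨labIn S L, labOut S L⟩

/-- `V` meets every attacker of `a` in `S`. -/
def HitsAtt (S : SETAF α) (a : α) (V : Finset α) : Prop :=
  ∀ B, S.att B a → ∃ b ∈ B, b ∈ V

/-- `V ∈ V_a`: a `⊆`-minimal set of arguments meeting every attacker of `a`. -/
def MemVa (S : SETAF α) (a : α) (V : Finset α) : Prop :=
  V ⊆ S.args ∧ HitsAtt S a V ∧ ∀ V', V' ⊂ V → ¬ HitsAtt S a V'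

open Classical in
/-- The NLP `P_𝔄` associated with a SETAF `𝔄`:
`{ a ← not b₁,…,not b_n | a ∈ A, {b₁,…,b_n} ∈ V_a }`. -/
noncomputable def nlpOf (S : SETAF α) : NLP α :=
  ((S.args ×ˢ S.args.powerset).filter (fun p => MemVa S p.1 p.2)).image
    (fun p => { head := p.1, bodyPos := ∅, bodyNeg := p.2 })

/-- Redundancy-Free Atomic Logic Program: every rule is atomic (no positive
body), every atom is a head, and no rule's negative body strictly contains
that of another rule with the same head. -/
def IsRFALP (P : NLP α) : Prop :=
  (∀ r ∈ P, r.bodyPos = ∅) ∧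
  HB P = P.image Rule.head ∧
  ∀ r ∈ P, ∀ r' ∈ P, r'.head = r.head → ¬ r'.bodyNeg ⊂ r.bodyNeg

/-- Unfolding: replace a rule `c ← a, a₁,…,a_m, not b₁,…,not b_n` by all rules
obtained by resolving `a` against the rules of the program with head `a`. -/
def StepU (P₁ P₂ : NLP α) : Prop :=
  ∃ r ∈ P₁, ∃ a ∈ r.bodyPos,
    P₂ = P₁.erase r ∪
      (P₁.filter (fun r' => r'.head = a)).image
        (fun r' => { head := r.head,
                     bodyPos := r'.bodyPos ∪ r.bodyPos.erase a,
                     bodyNeg := r'.bodyNeg ∪ r.bodyNeg })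

/-- Elimination of tautologies: delete a rule whose head occurs in its
positive body. -/
def StepT (P₁ P₂ : NLP α) : Prop :=
  ∃ r ∈ P₁, r.head ∈ r.bodyPos ∧ P₂ = P₁.erase r

/-- Positive reduction: delete a literal `not b` from the body of a rule,
where `b` is not the head of any rule of the program. -/
def StepP (P₁ P₂ : NLP α) : Prop :=
  ∃ r ∈ P₁, ∃ b ∈ r.bodyNeg, (∀ r' ∈ P₁, r'.head ≠ b) ∧
    P₂ = insert { head := r.head, bodyPos := r.bodyPos,
                  bodyNeg := r.bodyNeg.erase b } (P₁.erase r)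

/-- Elimination of non-minimal rules: delete a rule subsumed by a distinct
rule with the same head and smaller bodies. -/
def StepM (P₁ P₂ : NLP α) : Prop :=
  ∃ r ∈ P₁, ∃ r' ∈ P₁, r ≠ r' ∧ r'.head = r.head ∧
    r'.bodyPos ⊆ r.bodyPos ∧ r'.bodyNeg ⊆ r.bodyNeg ∧ P₂ = P₁.erase r

/-- `↦_UTPM`: the union of the four transformations. -/
def StepUTPM (P₁ P₂ : NLP α) : Prop :=
  StepU P₁ P₂ ∨ StepT P₁ P₂ ∨ StepP P₁ P₂ ∨ StepM P₁ P₂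

/-- `P` is irreducible w.r.t. `↦_UTPM`: there is no `P' ≠ P` with
`P ↦_UTPM P'`. -/
def UTPMIrreducible (P : NLP α) : Prop :=
  ¬ ∃ P', StepUTPM P P' ∧ P' ≠ P

section AuxStmt9

lemma interp_eq_iff {I J : Interp α} : I = J ↔ I.T = J.T ∧ I.F = J.F := by
  cases I; cases J; simp [Interp.mk.injEq]

lemma exists_minVa (S : SETAF α) (c : α) (W : Finset α) (hW : W ⊆ S.args)
    (hH : HitsAtt S c W) : ∃ V, V ⊆ W ∧ MemVa S c V := by
  classical
  obtain ⟨V, hV, hmin⟩ := Finset.exists_min_image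
    (W.powerset.filter fun V => HitsAtt S c V) Finset.card ⟨W, by simp [hH]⟩
  simp only [Finset.mem_filter, Finset.mem_powerset] at hV
  refine ⟨V, hV.1, hV.1.trans hW, hV.2, ?_⟩
  intro V' hV' hHit
  have hle : V.card ≤ V'.card := hmin V' (by
    simp only [Finset.mem_filter, Finset.mem_powerset]
    exact ⟨hV'.subset.trans hV.1, hHit⟩)
  exact absurd (Finset.card_lt_card hV') (not_lt.2 hle)

lemma T_char (S : SETAF α) (hS : S.Wf) (c : α) (X : Set α) :
    (∃ V : Finset α, MemVa S c V ∧ ∀ b ∈ V, b ∈ X) ↔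
      (∀ B, S.att B c → ∃ b ∈ B, b ∈ X) := by
  classical
  constructor
  · rintro ⟨V, ⟨_, hhit, _⟩, hVX⟩ B hB
    obtain ⟨b, hbB, hbV⟩ := hhit B hB
    exact ⟨b, hbB, hVX b hbV⟩
  · intro h
    have hW : HitsAtt S c (S.args.filter (fun b => b ∈ X)) := by
      intro B hB
      obtain ⟨b, hbB, hbX⟩ := h B hB
      exact ⟨b, hbB, Finset.mem_filter.2 ⟨(hS.1 B c hB).2.1 hbB, hbX⟩⟩
    obtain ⟨V, hVW, hV⟩ := exists_minVa S c _ (Finset.filter_subset _ _) hW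
    exact ⟨V, hV, fun b hb => (Finset.mem_filter.1 (hVW hb)).2⟩

lemma F_char (S : SETAF α) (hS : S.Wf) (c : α) (X : Set α) :
    (∀ V : Finset α, MemVa S c V → ∃ b ∈ V, b ∈ X) ↔
      (∃ B, S.att B c ∧ ∀ b ∈ B, b ∈ X) := by
  classical
  constructor
  · intro h
    by_contra hc
    push_neg at hc
    have hW : HitsAtt S c (S.args.filter (fun b => b ∉ X)) := by
      intro B hB
      obtain ⟨b, hbB, hbX⟩ := hc B hB
      exact ⟨b, hbB, Finset.mem_filter.2 ⟨(hS.1 B c hB).2.1 hbB, hbX⟩⟩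
    obtain ⟨V, hVW, hV⟩ := exists_minVa S c _ (Finset.filter_subset _ _) hW
    obtain ⟨b, hbV, hbX⟩ := h V hV
    exact (Finset.mem_filter.1 (hVW hbV)).2 hbX
  · rintro ⟨B, hB, hBX⟩ V hV
    obtain ⟨b, hbB, hbV⟩ := hV.2.1 B hB
    exact ⟨b, hbV, hBX b hbB⟩

lemma mem_nlpOf {S : SETAF α} {r : Rule α} :
    r ∈ nlpOf S ↔ r.head ∈ S.args ∧ r.bodyPos = ∅ ∧ MemVa S r.head r.bodyNeg := by
  simp only [nlpOf, Finset.mem_image, Finset.mem_filter, Finset.mem_product,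
    Finset.mem_powerset]
  constructor
  · rintro ⟨⟨a, V⟩, ⟨⟨ha, hV⟩, hm⟩, rfl⟩
    exact ⟨ha, rfl, hm⟩
  · rintro ⟨h1, h2, h3⟩
    refine ⟨⟨r.head, r.bodyNeg⟩, ⟨⟨h1, h3.1⟩, h3⟩, ?_⟩
    cases r with
    | mk h p n => simp_all

lemma reduct_head_T (S : SETAF α) (I : Interp α) (c : α) :
    (∃ q ∈ reduct (nlpOf S) I, q.head = c ∧ ¬ q.hasU) ↔
    c ∈ S.args ∧ ∃ V : Finset α, MemVa S c V ∧ (∀ b ∈ V, b ∉ I.T) ∧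
      (∀ b ∈ V, b ∈ I.F) := by
  constructor
  · rintro ⟨q, ⟨r, hr, hnT, hh, hp, hU⟩, hqc, hnU⟩
    rw [mem_nlpOf] at hr
    have hrc : r.head = c := by rw [← hh, hqc]
    refine ⟨hrc ▸ hr.1, r.bodyNeg, hrc ▸ hr.2.2, hnT, ?_⟩
    intro b hb
    by_contra hbf
    exact hnU (hU.2 ⟨b, hb, hbf⟩)
  · rintro ⟨hc, V, hV, hnT, hF⟩
    refine ⟨⟨c, ∅, ∃ b ∈ V, b ∉ I.F⟩,
      ⟨⟨c, ∅, V⟩, mem_nlpOf.2 ⟨hc, rfl, hV⟩, hnT, rfl, rfl, Iff.rfl⟩, rfl, ?_⟩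
    rintro ⟨b, hb, hbF⟩
    exact hbF (hF b hb)

lemma reduct_head_F (S : SETAF α) (I : Interp α) (c : α) (hc : c ∈ S.args) :
    (∀ q ∈ reduct (nlpOf S) I, q.head ≠ c) ↔
    ∀ V : Finset α, MemVa S c V → ∃ b ∈ V, b ∈ I.T := by
  constructor
  · intro h V hV
    by_contra hcon
    push_neg at hcon
    exact h ⟨c, ∅, ∃ b ∈ V, b ∉ I.F⟩
      ⟨⟨c, ∅, V⟩, mem_nlpOf.2 ⟨hc, rfl, hV⟩, hcon, rfl, rfl, Iff.rfl⟩ rfl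
  · rintro h q ⟨r, hr, hnT, hh, _, _⟩ hqc
    rw [mem_nlpOf] at hr
    have hrc : r.head = c := by rw [← hh, hqc]
    obtain ⟨b, hb, hbT⟩ := h r.bodyNeg (hrc ▸ hr.2.2)
    exact hnT b hb hbT

lemma psiIter_T (H : Finset α) (Q : Set (PosRule α))
    (hQ : ∀ q ∈ Q, q.bodyPos = ∅) (n : ℕ) :
    (PsiIter H Q (n+1)).T = {c | c ∈ H ∧ ∃ q ∈ Q, q.head = c ∧ ¬ q.hasU} := by
  ext c
  simp only [PsiIter, PsiOp, Set.mem_setOf_eq]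
  constructor
  · rintro ⟨h1, q, hq, h2, h3, _⟩
    exact ⟨h1, q, hq, h2, h3⟩
  · rintro ⟨h1, q, hq, h2, h3⟩
    exact ⟨h1, q, hq, h2, h3, by simp [hQ q hq]⟩

lemma psiIter_F (H : Finset α) (Q : Set (PosRule α))
    (hQ : ∀ q ∈ Q, q.bodyPos = ∅) (n : ℕ) :
    (PsiIter H Q (n+1)).F = {c | c ∈ H ∧ ∀ q ∈ Q, q.head ≠ c} := by
  ext c
  simp only [PsiIter, PsiOp, Set.mem_setOf_eq]
  constructor
  · rintro ⟨h1, h2⟩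
    refine ⟨h1, fun q hq hc => ?_⟩
    obtain ⟨a, ha, _⟩ := h2 q hq hc
    simp [hQ q hq] at ha
  · rintro ⟨h1, h2⟩
    exact ⟨h1, fun q hq hc => absurd hc (h2 q hq)⟩

lemma omega_T (H : Finset α) (P : NLP α) (I : Interp α)
    (hQ : ∀ q ∈ reduct P I, q.bodyPos = ∅) :
    (OmegaOp H P I).T = {c | c ∈ H ∧ ∃ q ∈ reduct P I, q.head = c ∧ ¬ q.hasU} := by
  ext c
  simp only [OmegaOp, Set.mem_iUnion]
  constructor
  · rintro ⟨n, hn⟩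
    cases n with
    | zero => simp [PsiIter] at hn
    | succ n => rwa [psiIter_T H _ hQ n] at hn
  · intro h
    exact ⟨1, by rwa [psiIter_T H _ hQ 0]⟩

lemma omega_F (H : Finset α) (P : NLP α) (I : Interp α)
    (hQ : ∀ q ∈ reduct P I, q.bodyPos = ∅) :
    (OmegaOp H P I).F = {c | c ∈ H ∧ ∀ q ∈ reduct P I, q.head ≠ c} := by
  ext c
  simp only [OmegaOp, Set.mem_iInter]
  constructor
  · intro h
    have h1 := h 1
    rwa [psiIter_F H _ hQ 0] at h1
  · intro h n
    cases n with
    | zero => simpa [PsiIter] using h.1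
    | succ n => rwa [psiIter_F H _ hQ n]

lemma psm_char (S : SETAF α) (hS : S.Wf) (I : Interp α) (hI : IsInterp S.args I) :
    IsPSModel S.args (nlpOf S) I ↔
      (I.T = {c | c ∈ S.args ∧ ∀ B, S.att B c → ∃ b ∈ B, b ∈ I.F}) ∧
      (I.F = {c | c ∈ S.args ∧ ∃ B, S.att B c ∧ ∀ b ∈ B, b ∈ I.T}) := by
  classical
  have hQ : ∀ q ∈ reduct (nlpOf S) I, q.bodyPos = ∅ := by
    rintro q ⟨r, hr, _, _, hp, _⟩
    rw [hp, (mem_nlpOf.1 hr).2.1]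
  have hT : (OmegaOp S.args (nlpOf S) I).T =
      {c | c ∈ S.args ∧ ∀ B, S.att B c → ∃ b ∈ B, b ∈ I.F} := by
    rw [omega_T _ _ _ hQ]
    ext c
    simp only [Set.mem_setOf_eq]
    constructor
    · rintro ⟨h1, hq⟩
      obtain ⟨hc, V, hV, hnT, hF⟩ := (reduct_head_T S I c).1 hq
      exact ⟨h1, (T_char S hS c I.F).1 ⟨V, hV, hF⟩⟩
    · rintro ⟨h1, h2⟩
      obtain ⟨V, hV, hF⟩ := (T_char S hS c I.F).2 h2
      exact ⟨h1, (reduct_head_T S I c).2 ⟨h1, V, hV,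
        fun b hb hbT => Set.disjoint_left.1 hI.2.2 hbT (hF b hb), hF⟩⟩
  have hF : (OmegaOp S.args (nlpOf S) I).F =
      {c | c ∈ S.args ∧ ∃ B, S.att B c ∧ ∀ b ∈ B, b ∈ I.T} := by
    rw [omega_F _ _ _ hQ]
    ext c
    simp only [Set.mem_setOf_eq]
    constructor
    · rintro ⟨h1, h2⟩
      exact ⟨h1, (F_char S hS c I.T).1 ((reduct_head_F S I c h1).1 h2)⟩
    · rintro ⟨h1, h2⟩
      exact ⟨h1, (reduct_head_F S I c h1).2 ((F_char S hS c I.T).2 h2)⟩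
  unfold IsPSModel
  rw [interp_eq_iff, hT, hF]
  constructor
  · rintro ⟨_, h1, h2⟩
    exact ⟨h1.symm, h2.symm⟩
  · rintro ⟨h1, h2⟩
    exact ⟨hI, h1.symm, h2.symm⟩

lemma complete_iff_eqs (S : SETAF α) (hS : S.Wf) (L : α → Lab) :
    CompleteLab S L ↔
      (labIn S L = {c | c ∈ S.args ∧ ∀ B, S.att B c → ∃ b ∈ B, b ∈ labOut S L}) ∧
      (labOut S L = {c | c ∈ S.args ∧ ∃ B, S.att B c ∧ ∀ b ∈ B, b ∈ labIn S L}) := by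
  constructor
  · rintro ⟨hadm, hcomp⟩
    constructor
    · ext c
      simp only [labIn, labOut, Set.mem_setOf_eq]
      constructor
      · rintro ⟨hc, hin⟩
        refine ⟨hc, fun B hB => ?_⟩
        obtain ⟨b, hb, hbo⟩ := (hadm c hc).1 hin B hB
        exact ⟨b, hb, (hS.1 B c hB).2.1 hb, hbo⟩
      · rintro ⟨hc, h⟩
        refine ⟨hc, ?_⟩
        cases hL : L c with
        | inn => rfl
        | out =>
          obtain ⟨B, hB, hall⟩ := (hadm c hc).2 hL
          obtain ⟨b, hb, _, hbo⟩ := h B hB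
          rw [hall b hb] at hbo
          exact absurd hbo (by simp)
        | und =>
          obtain ⟨B, hB, hall⟩ := (hcomp c hc hL).1
          obtain ⟨b, hb, _, hbo⟩ := h B hB
          exact absurd hbo (hall b hb)
    · ext c
      simp only [labIn, labOut, Set.mem_setOf_eq]
      constructor
      · rintro ⟨hc, hout⟩
        obtain ⟨B, hB, hall⟩ := (hadm c hc).2 hout
        exact ⟨hc, B, hB, fun b hb => ⟨(hS.1 B c hB).2.1 hb, hall b hb⟩⟩
      · rintro ⟨hc, B, hB, hall⟩
        refine ⟨hc, ?_⟩
        cases hL : L c with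
        | out => rfl
        | inn =>
          obtain ⟨b, hb, hbo⟩ := (hadm c hc).1 hL B hB
          rw [(hall b hb).2] at hbo
          exact absurd hbo (by simp)
        | und =>
          obtain ⟨b, hb, hbn⟩ := (hcomp c hc hL).2 B hB
          exact absurd (hall b hb).2 hbn
  · rintro ⟨hT, hF⟩
    have hTm := Set.ext_iff.1 hT
    have hFm := Set.ext_iff.1 hF
    simp only [labIn, labOut, Set.mem_setOf_eq] at hTm hFm
    constructor
    · intro a ha
      constructor
      · intro hin B hB
        obtain ⟨b, hb, _, hbo⟩ := ((hTm a).1 ⟨ha, hin⟩).2 B hB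
        exact ⟨b, hb, hbo⟩
      · intro hout
        obtain ⟨_, B, hB, hall⟩ := (hFm a).1 ⟨ha, hout⟩
        exact ⟨B, hB, fun b hb => (hall b hb).2⟩
    · intro a ha hund
      constructor
      · have hni : ¬ (a ∈ S.args ∧ ∀ B, S.att B a → ∃ b ∈ B, b ∈ S.args ∧ L b = Lab.out) := by
          intro hcon
          have := (hTm a).2 hcon
          rw [hund] at this
          exact absurd this.2 (by simp)
        push_neg at hni
        obtain ⟨B, hB, hall⟩ := hni ha
        exact ⟨B, hB, fun b hb hbo => hall b hb ((hS.1 B a hB).2.1 hb) hbo⟩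
      · intro B hB
        have hno : ¬ (a ∈ S.args ∧ ∃ B, S.att B a ∧ ∀ b ∈ B, b ∈ S.args ∧ L b = Lab.inn) := by
          intro hcon
          have := (hFm a).2 hcon
          rw [hund] at this
          exact absurd this.2 (by simp)
        push_neg at hno
        obtain ⟨b, hb, hbn⟩ := hno ha B hB
        exact ⟨b, hb, fun hbi => (hbn ((hS.1 B a hB).2.1 hb)) hbi⟩

end AuxStmt9

theorem stmt9 (S : SETAF α) (hS : S.Wf) :
    (∀ L : α → Lab, CompleteLab S L ↔ IsPSModel S.args (nlpOf S) (L2Iset S L)) ∧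
    (∀ M : Interp α, IsInterp S.args M →
      (IsPSModel S.args (nlpOf S) M ↔ CompleteLab S (I2L M))) := by
  classical
  have hpart1 : ∀ L : α → Lab, CompleteLab S L ↔
      IsPSModel S.args (nlpOf S) (L2Iset S L) := by
    intro L
    have hI : IsInterp S.args (L2Iset S L) := by
      refine ⟨fun a ha => ha.1, fun a ha => ha.1, Set.disjoint_left.2 ?_⟩
      rintro a ⟨_, hin⟩ ⟨_, hout⟩
      rw [hin] at hout
      exact absurd hout (by simp)
    rw [psm_char S hS _ hI]
    exact complete_iff_eqs S hS L
  refine ⟨hpart1, fun M hM => ?_⟩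
  have hTeq : labIn S (I2L M) = M.T := by
    ext a
    simp only [labIn, Set.mem_setOf_eq, I2L]
    by_cases h1 : a ∈ M.T
    · simp [h1, Finset.mem_coe.1 (hM.1 h1)]
    · rw [if_neg h1]
      by_cases h2 : a ∈ M.F
      · simp [h1, h2]
      · simp [h1, h2]
  have hFeq : labOut S (I2L M) = M.F := by
    ext a
    simp only [labOut, Set.mem_setOf_eq, I2L]
    by_cases h1 : a ∈ M.T
    · simp [h1, Set.disjoint_left.1 hM.2.2 h1]
    · rw [if_neg h1]
      by_cases h2 : a ∈ M.F
      · simp [h2, Finset.mem_coe.1 (hM.2.1 h2)]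
      · simp [h2]
  have hML : L2Iset S (I2L M) = M := by
    rw [interp_eq_iff]
    exact ⟨hTeq, hFeq⟩
  have := hpart1 (I2L M)
  rw [hML] at this
  exact this.symm
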